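/- Converse bound R1 ≤ H(Y1) + ε: if H(M1 | Y1, M2) ≤ nε, M1 has entropy nR1, M1 is independent of M2, and (M1, M2) → X → Y1 is a Markov chain with Y1 = f(X) deterministic in a memoryless channel used n times, then nR1 ≤ Σ_{i=1}^n H(Y1i) + nε. -/
import Mathlib


open scoped Classical BigOperators

namespace SecBC

variable {Ω : Type*} [Fintype Ω]

/-- Probability that the random variable `X` takes value `a`, under pmf `p` on `Ω`. -/
noncomputable def prob (p : Ω → ℝ) {A : Type*} [Fintype A] [DecidableEq A]
    (X : Ω → A) (a : A) : ℝ := ∑ ω, if X ω = a then p ω else 0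

/-- Shannon entropy of a random variable. -/
noncomputable def ent (p : Ω → ℝ) {A : Type*} [Fintype A] [DecidableEq A]
    (X : Ω → A) : ℝ := -∑ a, prob p X a * Real.log (prob p X a)

/-- Conditional Shannon entropy `H(X | Y)`. -/
noncomputable def condEnt (p : Ω → ℝ) {A B : Type*} [Fintype A] [DecidableEq A]
    [Fintype B] [DecidableEq B] (X : Ω → A) (Y : Ω → B) : ℝ :=
  ent p (fun ω => (X ω, Y ω)) - ent p Y

/-- Mutual information `I(X ; Y)`. -/
noncomputable def mutInfo (p : Ω → ℝ) {A B : Type*} [Fintype A] [DecidableEq A]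
    [Fintype B] [DecidableEq B] (X : Ω → A) (Y : Ω → B) : ℝ :=
  ent p X + ent p Y - ent p (fun ω => (X ω, Y ω))

/-- Conditional mutual information `I(X ; Y | Z)`. -/
noncomputable def condMutInfo (p : Ω → ℝ) {A B C : Type*} [Fintype A] [DecidableEq A]
    [Fintype B] [DecidableEq B] [Fintype C] [DecidableEq C]
    (X : Ω → A) (Y : Ω → B) (Z : Ω → C) : ℝ :=
  condEnt p X Z + condEnt p Y Z - condEnt p (fun ω => (X ω, Y ω)) Z

/-- Independence of two random variables. -/
def IndepRV (p : Ω → ℝ) {A B : Type*} [Fintype A] [DecidableEq A]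
    [Fintype B] [DecidableEq B] (X : Ω → A) (Y : Ω → B) : Prop :=
  ∀ a b, prob p (fun ω => (X ω, Y ω)) (a, b) = prob p X a * prob p Y b

/-- Markov chain `X → Y → Z`: conditional independence of `X` and `Z` given `Y`. -/
def MarkovChain (p : Ω → ℝ) {A B C : Type*} [Fintype A] [DecidableEq A]
    [Fintype B] [DecidableEq B] [Fintype C] [DecidableEq C]
    (X : Ω → A) (Y : Ω → B) (Z : Ω → C) : Prop :=
  ∀ a b c, prob p (fun ω => (X ω, Y ω, Z ω)) (a, b, c) * prob p Y b
    = prob p (fun ω => (X ω, Y ω)) (a, b) * prob p (fun ω => (Y ω, Z ω)) (b, c)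

/-- `p` is a probability mass function on the finite sample space `Ω`. -/
structure IsPMF (p : Ω → ℝ) : Prop where
  nonneg : ∀ ω, 0 ≤ p ω
  sum_one : ∑ ω, p ω = 1

section Aux

variable {p : Ω → ℝ} {A B : Type*} [Fintype A] [DecidableEq A] [Fintype B] [DecidableEq B]

lemma prob_nonneg (hp : IsPMF p) (X : Ω → A) (a : A) : 0 ≤ prob p X a := by
  unfold prob
  apply Finset.sum_nonneg
  intro ω _
  split
  · exact hp.nonneg ω
  · exact le_refl 0

lemma sum_prob (hp : IsPMF p) (X : Ω → A) : ∑ a, prob p X a = 1 := by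
  unfold prob
  rw [Finset.sum_comm]
  simp [hp.sum_one]

lemma marg_fst (X : Ω → A) (Y : Ω → B) (a : A) :
    ∑ b, prob p (fun ω => (X ω, Y ω)) (a, b) = prob p X a := by
  unfold prob
  rw [Finset.sum_comm]
  congr 1; funext ω
  simp [Prod.ext_iff, ite_and]

lemma marg_snd (X : Ω → A) (Y : Ω → B) (b : B) :
    ∑ a, prob p (fun ω => (X ω, Y ω)) (a, b) = prob p Y b := by
  unfold prob
  rw [Finset.sum_comm]
  congr 1; funext ω
  simp [Prod.ext_iff, ite_and]

lemma prob_pair_le_fst (hp : IsPMF p) (X : Ω → A) (Y : Ω → B) (a : A) (b : B) :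
    prob p (fun ω => (X ω, Y ω)) (a, b) ≤ prob p X a := by
  apply Finset.sum_le_sum
  intro ω _
  dsimp only
  split_ifs with h1 h2
  · exact le_refl _
  · exact absurd (congrArg Prod.fst h1) h2
  · exact hp.nonneg ω
  · exact le_refl 0

lemma prob_pair_le_snd (hp : IsPMF p) (X : Ω → A) (Y : Ω → B) (a : A) (b : B) :
    prob p (fun ω => (X ω, Y ω)) (a, b) ≤ prob p Y b := by
  apply Finset.sum_le_sum
  intro ω _
  dsimp only
  split_ifs with h1 h2
  · exact le_refl _
  · exact absurd (congrArg Prod.snd h1) h2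
  · exact hp.nonneg ω
  · exact le_refl 0

lemma ent_comp_inj (X : Ω → A) {g : A → B} (hg : Function.Injective g) :
    ent p (fun ω => g (X ω)) = ent p X := by
  have hval : ∀ a, prob p (fun ω => g (X ω)) (g a) = prob p X a := by
    intro a; unfold prob; congr 1; funext ω
    simp [hg.eq_iff]
  have hzero : ∀ b, b ∉ Finset.univ.image g → prob p (fun ω => g (X ω)) b = 0 := by
    intro b hb
    unfold prob
    apply Finset.sum_eq_zero
    intro ω _
    rw [if_neg]
    intro h
    exact hb (Finset.mem_image.2 ⟨X ω, Finset.mem_univ _, h⟩)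
  unfold ent
  congr 1
  rw [← Finset.sum_subset (Finset.subset_univ (Finset.univ.image g))
    (fun b _ hb => by rw [hzero b hb]; simp)]
  rw [Finset.sum_image (fun x _ y _ h => hg h)]
  simp only [hval]

lemma ent_unique {C : Type*} [Fintype C] [DecidableEq C] [Unique C]
    (hp : IsPMF p) (X : Ω → C) : ent p X = 0 := by
  unfold ent
  have : ∀ c : C, prob p X c = 1 := by
    intro c
    unfold prob
    simp [Subsingleton.elim (X _) c, hp.sum_one]
  simp [this]

lemma sum_joint_log_fst (X : Ω → A) (Y : Ω → B) :
    ∑ c : A × B, prob p (fun ω => (X ω, Y ω)) c * Real.log (prob p X c.1)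
      = ∑ a, prob p X a * Real.log (prob p X a) := by
  rw [Fintype.sum_prod_type]
  congr 1; funext a
  dsimp only
  rw [← Finset.sum_mul, marg_fst]

lemma sum_joint_log_snd (X : Ω → A) (Y : Ω → B) :
    ∑ c : A × B, prob p (fun ω => (X ω, Y ω)) c * Real.log (prob p Y c.2)
      = ∑ b, prob p Y b * Real.log (prob p Y b) := by
  rw [Fintype.sum_prod_type_right]
  congr 1; funext b
  dsimp only
  rw [← Finset.sum_mul, marg_snd]

/-- Subadditivity `H(X,Y) ≤ H(X) + H(Y)`. -/
lemma ent_pair_le (hp : IsPMF p) (X : Ω → A) (Y : Ω → B) :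
    ent p (fun ω => (X ω, Y ω)) ≤ ent p X + ent p Y := by
  unfold ent
  rw [← sum_joint_log_fst (p := p) X Y, ← sum_joint_log_snd (p := p) X Y]
  have key : ∀ c : A × B,
      prob p (fun ω => (X ω, Y ω)) c * Real.log (prob p (fun ω => (X ω, Y ω)) c)
        - prob p (fun ω => (X ω, Y ω)) c * Real.log (prob p X c.1)
        - prob p (fun ω => (X ω, Y ω)) c * Real.log (prob p Y c.2)
      ≥ prob p (fun ω => (X ω, Y ω)) c - prob p X c.1 * prob p Y c.2 := by
    rintro ⟨a, b⟩
    set s := prob p (fun ω => (X ω, Y ω)) (a, b) with hs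
    have hs0 : 0 ≤ s := prob_nonneg hp _ _
    rcases eq_or_lt_of_le hs0 with h | h
    · simp only [← h]
      have := mul_nonneg (prob_nonneg hp X a) (prob_nonneg hp Y b)
      simp; linarith
    · have hqa : 0 < prob p X a := lt_of_lt_of_le h (prob_pair_le_fst hp X Y a b)
      have hqb : 0 < prob p Y b := lt_of_lt_of_le h (prob_pair_le_snd hp X Y a b)
      have hpos : 0 < prob p X a * prob p Y b / s := by positivity
      have hlog := Real.log_le_sub_one_of_pos hpos
      rw [Real.log_div (by positivity) (ne_of_gt h),
        Real.log_mul (ne_of_gt hqa) (ne_of_gt hqb)] at hlog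
      have h2 : s * (Real.log (prob p X a) + Real.log (prob p Y b) - Real.log s)
          ≤ s * (prob p X a * prob p Y b / s - 1) :=
        mul_le_mul_of_nonneg_left hlog hs0
      have h3 : s * (prob p X a * prob p Y b / s - 1) = prob p X a * prob p Y b - s := by
        field_simp
      dsimp only
      nlinarith
  have hsum : ∑ c : A × B,
      (prob p (fun ω => (X ω, Y ω)) c - prob p X c.1 * prob p Y c.2) = 0 := by
    rw [Finset.sum_sub_distrib, sum_prob hp]
    rw [Fintype.sum_prod_type]
    simp only [← Finset.sum_mul, ← Finset.mul_sum]
    rw [sum_prob hp, sum_prob hp]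
    norm_num
  have := Finset.sum_le_sum (fun c (_ : c ∈ Finset.univ) => key c)
  rw [hsum] at this
  rw [Finset.sum_sub_distrib, Finset.sum_sub_distrib] at this
  linarith

/-- Monotonicity `H(X) ≤ H(X,Y)`. -/
lemma ent_le_ent_pair (hp : IsPMF p) (X : Ω → A) (Y : Ω → B) :
    ent p X ≤ ent p (fun ω => (X ω, Y ω)) := by
  unfold ent
  rw [← sum_joint_log_fst (p := p) X Y]
  have key : ∀ c : A × B,
      prob p (fun ω => (X ω, Y ω)) c * Real.log (prob p (fun ω => (X ω, Y ω)) c)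
        ≤ prob p (fun ω => (X ω, Y ω)) c * Real.log (prob p X c.1) := by
    rintro ⟨a, b⟩
    set s := prob p (fun ω => (X ω, Y ω)) (a, b) with hs
    have hs0 : 0 ≤ s := prob_nonneg hp _ _
    rcases eq_or_lt_of_le hs0 with h | h
    · rw [← h]; simp
    · exact mul_le_mul_of_nonneg_left
        (Real.log_le_log (by exact h) (prob_pair_le_fst hp X Y a b)) hs0
  have := Finset.sum_le_sum (fun c (_ : c ∈ Finset.univ) => key c)
  linarith

/-- Independence gives `H(X,Y) = H(X) + H(Y)`. -/
lemma ent_pair_of_indep (hp : IsPMF p) (X : Ω → A) (Y : Ω → B)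
    (h : IndepRV p X Y) :
    ent p (fun ω => (X ω, Y ω)) = ent p X + ent p Y := by
  unfold ent
  rw [← sum_joint_log_fst (p := p) X Y, ← sum_joint_log_snd (p := p) X Y]
  have key : ∀ c : A × B,
      prob p (fun ω => (X ω, Y ω)) c * Real.log (prob p (fun ω => (X ω, Y ω)) c)
        = prob p (fun ω => (X ω, Y ω)) c * Real.log (prob p X c.1)
          + prob p (fun ω => (X ω, Y ω)) c * Real.log (prob p Y c.2) := by
    rintro ⟨a, b⟩
    rw [h a b]
    rcases eq_or_ne (prob p X a) 0 with h1 | h1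
    · simp [h1]
    rcases eq_or_ne (prob p Y b) 0 with h2 | h2
    · simp [h2]
    rw [Real.log_mul h1 h2]
    ring
  rw [Finset.sum_congr rfl (fun c _ => key c), Finset.sum_add_distrib]
  ring

lemma ent_pi_le (hp : IsPMF p) {𝒴 : Type*} [Fintype 𝒴] [DecidableEq 𝒴] :
    ∀ (n : ℕ) (Y : Fin n → Ω → 𝒴),
      ent p (fun ω => (fun i => Y i ω)) ≤ ∑ i, ent p (Y i) := by
  intro n
  induction n with
  | zero =>
      intro Y
      rw [ent_unique hp]
      simp
  | succ n ih =>
      intro Y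
      have hg : Function.Injective
          (fun c : 𝒴 × (Fin n → 𝒴) => (Fin.cons c.1 c.2 : Fin (n+1) → 𝒴)) := by
        rintro ⟨y, t⟩ ⟨y', t'⟩ h
        have h0 := congrFun h 0
        have hs : ∀ i : Fin n, t i = t' i := by
          intro i
          have := congrFun h i.succ
          simpa using this
        simp only [Fin.cons_zero] at h0
        exact Prod.ext h0 (funext hs)
      have heq : (fun ω => (fun i => Y i ω)) =
          fun ω => (fun c : 𝒴 × (Fin n → 𝒴) => (Fin.cons c.1 c.2 : Fin (n+1) → 𝒴))
            ((Y 0 ω, fun i : Fin n => Y i.succ ω)) := by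
        funext ω
        dsimp only
        refine funext fun i => ?_
        refine Fin.cases ?_ ?_ i
        · simp
        · intro j; simp
      rw [heq, ent_comp_inj _ hg]
      calc ent p (fun ω => (Y 0 ω, fun i : Fin n => Y i.succ ω))
          ≤ ent p (Y 0) + ent p (fun ω => (fun i : Fin n => Y i.succ ω)) :=
            ent_pair_le hp _ _
        _ ≤ ent p (Y 0) + ∑ i : Fin n, ent p (Y i.succ) := by
            have := ih (fun i => Y i.succ)
            linarith
        _ = ∑ i, ent p (Y i) := (Fin.sum_univ_succ (fun i => ent p (Y i))).symm

end Aux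

set_option maxHeartbeats 4000000 in
/-- Converse bound `R1 ≤ H(Y1) + ε`: with `H(M1|Y1ⁿ,M2) ≤ nε`,
`H(M1) = nR1`, `M1 ⟂ M2`, Markov chains `(M1,M2) → Xᵢ → Y1ᵢ` and `Y1ᵢ = f(Xᵢ)`
deterministic, one has `nR1 ≤ ∑ᵢ H(Y1ᵢ) + nε`. -/
theorem statement11 {Ω : Type*} [Fintype Ω] {p : Ω → ℝ} (hp : IsPMF p)
    {A B 𝒳 𝒴 : Type*} [Fintype A] [DecidableEq A] [Fintype B] [DecidableEq B]
    [Fintype 𝒳] [DecidableEq 𝒳] [Fintype 𝒴] [DecidableEq 𝒴]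
    (n : ℕ) (M1 : Ω → A) (M2 : Ω → B) (X : Fin n → Ω → 𝒳) (Y : Fin n → Ω → 𝒴)
    (f : 𝒳 → 𝒴) (R1 ε : ℝ) (hε : 0 ≤ ε)
    (hindep : IndepRV p M1 M2)
    (hent : ent p M1 = n * R1)
    (hdet : ∀ i ω, Y i ω = f (X i ω))
    (hmarkov : ∀ i, MarkovChain p (fun ω => (M1 ω, M2 ω)) (X i) (Y i))
    (hFano : condEnt p M1 (fun ω => ((fun i => Y i ω), M2 ω)) ≤ n * ε) :
    (n : ℝ) * R1 ≤ (∑ i, ent p (Y i)) + n * ε := by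
  classical
  have hFano' : ent p (fun ω => (M1 ω, ((fun i => Y i ω), M2 ω)))
      - ent p (fun ω => ((fun i => Y i ω), M2 ω)) ≤ n * ε := by
    have h := hFano
    unfold condEnt at h
    exact h
  have hsub : ent p (fun ω => ((fun i => Y i ω), M2 ω))
      ≤ ent p (fun ω => (fun i => Y i ω)) + ent p M2 :=
    ent_pair_le hp (fun ω => (fun i => Y i ω)) M2
  have hind : ent p (fun ω => (M1 ω, M2 ω)) = ent p M1 + ent p M2 :=
    ent_pair_of_indep hp M1 M2 hindep
  have hg : Function.Injective
      (fun c : (A × B) × (Fin n → 𝒴) => (c.1.1, (c.2, c.1.2))) := by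
    rintro ⟨⟨a, b⟩, y⟩ ⟨⟨a', b'⟩, y'⟩ h
    simp only [Prod.mk.injEq] at h
    obtain ⟨h1, h2, h3⟩ := h
    simp [h1, h2, h3]
  have hrelabel : ent p (fun ω => (M1 ω, ((fun i => Y i ω), M2 ω)))
      = ent p (fun ω => ((M1 ω, M2 ω), (fun i => Y i ω))) :=
    ent_comp_inj (p := p) (fun ω => ((M1 ω, M2 ω), (fun i => Y i ω))) hg
  have hmono : ent p (fun ω => (M1 ω, M2 ω))
      ≤ ent p (fun ω => ((M1 ω, M2 ω), (fun i => Y i ω))) :=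
    ent_le_ent_pair hp (fun ω => (M1 ω, M2 ω)) (fun ω => (fun i => Y i ω))
  have hpi : ent p (fun ω => (fun i => Y i ω)) ≤ ∑ i, ent p (Y i) := ent_pi_le hp n Y
  linarith
end SecBC
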